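/- arXiv:1212.3948 — 4 statements merged into one kernel-verified Lean document; each statement's English description precedes it below -/
import Mathlib

section
/- Let N be a P-regular distributive nearring. Then for every right ideal R and every left ideal L of N, (P + R) ∩ (P + L) = P + RL, where RL denotes the additive subgroup generated by products rl with r ∈ R, l ∈ L (or the set of sums of such products). -/
open Pointwise

/-- A (right) nearring: additive group, multiplicative semigroup, right distributivity. -/
class Nearring (N : Type*) extends AddGroup N, Semigroup N where
  right_distrib : ∀ a b c : N, (a + b) * c = a * c + b * c

variable {N : Type*}

/-- `S` is an additive subgroup of the nearring (as a set). -/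
def IsAddSub [Nearring N] (S : Set N) : Prop :=
  S.Nonempty ∧ (∀ a ∈ S, ∀ b ∈ S, a + b ∈ S) ∧ ∀ a ∈ S, -a ∈ S

/-- `S` is a normal additive subgroup. -/
def IsNormalAddSub [Nearring N] (S : Set N) : Prop :=
  IsAddSub S ∧ ∀ s ∈ S, ∀ n : N, n + s + -n ∈ S

/-- `P` is a (two-sided) ideal of the nearring `N`. -/
def IsIdeal [Nearring N] (P : Set N) : Prop :=
  IsNormalAddSub P ∧ (∀ p ∈ P, ∀ n : N, p * n ∈ P) ∧
    (∀ p ∈ P, ∀ n : N, n * p ∈ P) ∧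
    ∀ p ∈ P, ∀ n₁ n₂ : N, n₁ * (n₂ + p) - n₁ * n₂ ∈ P

/-- `N` is `P`-regular: `P` is an ideal and for each `x` there is `y` with `x*y*x - x ∈ P`. -/
def IsPRegular [Nearring N] (P : Set N) : Prop :=
  IsIdeal P ∧ ∀ x : N, ∃ y : N, x * y * x - x ∈ P

/-- `B` is a bi-ideal: additive subgroup with `BNB ⊆ B`. -/
def IsBiIdeal [Nearring N] (B : Set N) : Prop :=
  IsAddSub B ∧ ∀ b₁ ∈ B, ∀ n : N, ∀ b₂ ∈ B, b₁ * n * b₂ ∈ B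

/-- The nearring is distributive (also left distributive). -/
def IsDistrib (N : Type*) [Nearring N] : Prop :=
  ∀ a b c : N, a * (b + c) = a * b + a * c

/-- The set `A N C = {a n c : a ∈ A, n ∈ N, c ∈ C}`. -/
def prodSet [Nearring N] (A C : Set N) : Set N :=
  {z | ∃ a ∈ A, ∃ n : N, ∃ c ∈ C, z = a * n * c}

/-- `R` is a right ideal: normal additive subgroup with `RN ⊆ R`. -/
def IsRightIdeal {N : Type*} [Nearring N] (R : Set N) : Prop :=
  IsNormalAddSub R ∧ ∀ r ∈ R, ∀ n : N, r * n ∈ R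

/-- `L` is a left ideal. -/
def IsLeftIdeal {N : Type*} [Nearring N] (L : Set N) : Prop :=
  IsNormalAddSub L ∧ (∀ l ∈ L, ∀ n : N, n * l ∈ L) ∧
    ∀ l ∈ L, ∀ n₁ n₂ : N, n₁ * (n₂ + l) - n₁ * n₂ ∈ L
/-! Write `x = p₁ + r = p₂ + l` with `pᵢ ∈ P`, `r ∈ R`, `l ∈ L`, and pick `y` with `x y x ≡ x` modulo `P`.
Both distributive laws expand `x y x = x y (p₂ + l)` into `x y p₂ + p₁ y l + (r y) l`, whose first two
terms lie in `P` because `P` absorbs products on both sides; hence `x ≡ (r y) l` modulo `P`.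
The reverse inclusion holds because the additive subgroup generated by `RL` lies in `R ∩ L`. -/

namespace IsAddSub

variable [Nearring N] {S : Set N}

theorem zero_mem (h : IsAddSub S) : (0 : N) ∈ S := by
  obtain ⟨a, ha⟩ := h.1
  simpa using h.2.1 a ha (-a) (h.2.2 a ha)

def toAddSubgroup (h : IsAddSub S) : AddSubgroup N where
  carrier := S
  add_mem' ha hb := h.2.1 _ ha _ hb
  zero_mem' := h.zero_mem
  neg_mem' ha := h.2.2 _ ha

end IsAddSub

section ProductClosure

variable [Nearring N] {R L : Set N}

theorem closure_mul_subset_of_mul_right_mem (hR : IsAddSub R) (hRN : ∀ r ∈ R, ∀ n : N, r * n ∈ R) :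
    (AddSubgroup.closure {z : N | ∃ r ∈ R, ∃ l ∈ L, z = r * l} : Set N) ⊆ R := by
  refine SetLike.coe_subset_coe.mpr <| (AddSubgroup.closure_le hR.toAddSubgroup).mpr ?_
  rintro _ ⟨r, hr, l, -, rfl⟩
  exact hRN r hr l

theorem closure_mul_subset_of_mul_left_mem (hL : IsAddSub L) (hNL : ∀ l ∈ L, ∀ n : N, n * l ∈ L) :
    (AddSubgroup.closure {z : N | ∃ r ∈ R, ∃ l ∈ L, z = r * l} : Set N) ⊆ L := by
  refine SetLike.coe_subset_coe.mpr <| (AddSubgroup.closure_le hL.toAddSubgroup).mpr ?_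
  rintro _ ⟨r, -, l, hl, rfl⟩
  exact hNL l hl r

end ProductClosure

theorem sub_mul_mul_mem_of_mul_mul_sub_mem [Nearring N] (hd : IsDistrib N) {P : Set N}
    (hP : IsAddSub P) (hPN : ∀ p ∈ P, ∀ n : N, p * n ∈ P) (hNP : ∀ p ∈ P, ∀ n : N, n * p ∈ P)
    {p₁ p₂ r l y : N} (hp₁ : p₁ ∈ P) (hp₂ : p₂ ∈ P) (h : p₁ + r = p₂ + l)
    (hy : (p₁ + r) * y * (p₁ + r) - (p₁ + r) ∈ P) :
    (p₁ + r) - r * y * l ∈ P := by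
  have hexpand : (p₁ + r) * y * (p₁ + r) =
      (p₁ + r) * y * p₂ + (p₁ * y * l + r * y * l) := by
    nth_rw 2 [h]
    rw [hd, Nearring.right_distrib p₁ r y, Nearring.right_distrib (p₁ * y) (r * y) l]
  have hrest : (p₁ + r) * y * p₂ + p₁ * y * l ∈ P :=
    hP.2.1 _ (hNP p₂ hp₂ _) _ (hPN _ (hPN p₁ hp₁ y) l)
  have hdiff : (p₁ + r) - r * y * l =
      -((p₁ + r) * y * (p₁ + r) - (p₁ + r)) + ((p₁ + r) * y * p₂ + p₁ * y * l) := by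
    rw [hexpand]
    simp only [sub_eq_add_neg, neg_add_rev, neg_neg, add_assoc, neg_add_cancel_left,
      neg_add_cancel, add_zero]
  rw [hdiff]
  exact hP.2.1 _ (hP.2.2 _ hy) _ hrest

theorem stmt4 {N : Type*} [Nearring N] (hd : IsDistrib N) (P : Set N)
    (hP : IsPRegular P) (R L : Set N) (hR : IsRightIdeal R) (hL : IsLeftIdeal L) :
    (P + R) ∩ (P + L) =
      P + (AddSubgroup.closure {z : N | ∃ r ∈ R, ∃ l ∈ L, z = r * l} : Set N) := by
  obtain ⟨⟨⟨hPsub, -⟩, hPN, hNP, -⟩, hreg⟩ := hP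
  obtain ⟨⟨hRsub, -⟩, hRN⟩ := hR
  obtain ⟨⟨hLsub, -⟩, hNL, -⟩ := hL
  apply Set.Subset.antisymm
  · rintro _ ⟨⟨p₁, hp₁, r, hr, rfl⟩, ⟨p₂, hp₂, l, hl, h⟩⟩
    obtain ⟨y, hy⟩ := hreg (p₁ + r)
    exact ⟨_, sub_mul_mul_mem_of_mul_mul_sub_mem hd hPsub hPN hNP hp₁ hp₂ h.symm hy, r * y * l,
      AddSubgroup.subset_closure ⟨r * y, hRN r hr y, l, hl, rfl⟩, sub_add_cancel _ _⟩
  · exact Set.subset_inter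
      (Set.add_subset_add_left (closure_mul_subset_of_mul_right_mem hRsub hRN))
      (Set.add_subset_add_left (closure_mul_subset_of_mul_left_mem hLsub hNL))
end

section
/- Let N be a P-regular nearring and B a bi-ideal of N. Then P + B = P + BNB (as sets, where X + Y = {x+y : x ∈ X, y ∈ Y} and BNB = {b₁nb₂ : b₁,b₂ ∈ B, n ∈ N}). -/
open Pointwise

variable {N : Type*}

theorem IsAddSub.add_subset_self [Nearring N] {S : Set N} (hS : IsAddSub S) : S + S ⊆ S :=
  Set.add_subset_iff.2 hS.2.1

theorem IsAddSub.add_add_subset [Nearring N] {S : Set N} (hS : IsAddSub S) (T : Set N) :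
    S + (S + T) ⊆ S + T := by
  rw [← add_assoc]
  exact Set.add_subset_add_right hS.add_subset_self

theorem IsBiIdeal.prodSet_self_subset [Nearring N] {B : Set N} (hB : IsBiIdeal B) :
    prodSet B B ⊆ B := by
  rintro _ ⟨b₁, hb₁, n, b₂, hb₂, rfl⟩
  exact hB.2 b₁ hb₁ n b₂ hb₂

/-- With `x y x - x ∈ P`, every `x` splits as `(x - x y x) + x y x`. -/
theorem IsPRegular.subset_add_prodSet [Nearring N] {P : Set N} (hP : IsPRegular P) (X : Set N) :
    X ⊆ P + prodSet X X := by
  intro x hx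
  obtain ⟨y, hy⟩ := hP.2 x
  have hxP : x - x * y * x ∈ P := by simpa only [neg_sub] using hP.1.1.1.2.2 _ hy
  exact ⟨x - x * y * x, hxP, x * y * x, ⟨x, hx, y, x, hx, rfl⟩, sub_add_cancel x _⟩

theorem stmt8 {N : Type*} [Nearring N] (P : Set N) (hP : IsPRegular P)
    (B : Set N) (hB : IsBiIdeal B) :
    P + B = P + prodSet B B := by
  refine Set.Subset.antisymm ?_ (Set.add_subset_add_left hB.prodSet_self_subset)
  calc P + B ⊆ P + (P + prodSet B B) := Set.add_subset_add_left (hP.subset_add_prodSet B)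
    _ ⊆ P + prodSet B B := hP.1.1.1.add_add_subset _
end

section
/- Let N be a P-regular nearring and B₁, B₂ bi-ideals of N. Then P + (B₁ ∩ B₂) ⊆ P + (B₁NB₂ ∩ B₂NB₁), where X + Y = {x+y : x ∈ X, y ∈ Y} and BᵢNBⱼ = {bnb' : b ∈ Bᵢ, n ∈ N, b' ∈ Bⱼ}. -/
open Pointwise

variable {N : Type*}

/-! If `x ∈ B₁ ∩ B₂` and `x y x - x ∈ P`, then `p + x = (p + (x - x y x)) + x y x`, where
`x y x ∈ B₁ N B₂ ∩ B₂ N B₁` by its very shape and `x - x y x ∈ P`. -/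

theorem add_subset_add_of_forall_exists_sub_mem {G : Type*} [AddGroup G] {P S T : Set G}
    (hP : ∀ a ∈ P, ∀ b ∈ P, a + b ∈ P) (h : ∀ x ∈ S, ∃ z ∈ T, x - z ∈ P) :
    P + S ⊆ P + T := by
  rintro _ ⟨p, hp, x, hx, rfl⟩
  obtain ⟨z, hz, hxz⟩ := h x hx
  refine ⟨p + (x - z), hP p hp _ hxz, z, hz, ?_⟩
  show p + (x - z) + z = p + x
  rw [add_assoc, sub_add_cancel]

theorem mul_mul_self_mem_prodSet_inter [Nearring N] {A C : Set N} {x : N} (hx : x ∈ A ∩ C)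
    (y : N) : x * y * x ∈ prodSet A C ∩ prodSet C A :=
  ⟨⟨x, hx.1, y, x, hx.2, rfl⟩, ⟨x, hx.2, y, x, hx.1, rfl⟩⟩

theorem IsPRegular.exists_sub_mul_mul_self_mem [Nearring N] {P : Set N} (hP : IsPRegular P)
    (x : N) : ∃ y, x - x * y * x ∈ P := by
  obtain ⟨y, hy⟩ := hP.2 x
  exact ⟨y, neg_sub (x * y * x) x ▸ hP.1.1.1.2.2 _ hy⟩

theorem stmt9_general {N : Type*} [Nearring N] (P : Set N) (hP : IsPRegular P)
    (B₁ B₂ : Set N) :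
    P + (B₁ ∩ B₂) ⊆ P + (prodSet B₁ B₂ ∩ prodSet B₂ B₁) := by
  refine add_subset_add_of_forall_exists_sub_mem hP.1.1.1.2.1 fun x hx => ?_
  obtain ⟨y, hy⟩ := hP.exists_sub_mul_mul_self_mem x
  exact ⟨x * y * x, mul_mul_self_mem_prodSet_inter hx y, hy⟩

theorem stmt9 {N : Type*} [Nearring N] (P : Set N) (hP : IsPRegular P)
    (B₁ B₂ : Set N) (h₁ : IsBiIdeal B₁) (h₂ : IsBiIdeal B₂) :
    P + (B₁ ∩ B₂) ⊆ P + (prodSet B₁ B₂ ∩ prodSet B₂ B₁) :=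
  stmt9_general P hP B₁ B₂
end

section
/- Let N be a P-regular nearring and B₁,…,Bₙ bi-ideals of N (n ≥ 2). Then P + (B₁ ∩ … ∩ Bₙ) ⊆ P + (B₁NBₙ ∩ B₂NBₙ ∩ … ∩ B_{n-1}NBₙ ∩ BₙNB₁ ∩ BₙNB₂ ∩ … ∩ BₙNB_{n-1}). -/
open Pointwise

variable {N : Type*}

/-! For `b` in every `Bᵢ`, regularity gives `y` with `byb - b ∈ P`, and the single element `byb`
lies in every `BᵢNBₙ` and `BₙNBᵢ`; so `p + b = (p - (byb - b)) + byb`. -/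

theorem IsPRegular.isAddSub [Nearring N] {P : Set N} (hP : IsPRegular P) : IsAddSub P :=
  hP.1.1.1

theorem mul_mul_mem_prodSet [Nearring N] {A C : Set N} {a c : N} (ha : a ∈ A) (m : N)
    (hc : c ∈ C) : a * m * c ∈ prodSet A C :=
  ⟨a, ha, m, c, hc, rfl⟩

theorem IsAddSub.add_mem_add_of_sub_mem [Nearring N] {P S : Set N} (hP : IsAddSub P)
    {p x z : N} (hp : p ∈ P) (hzx : z - x ∈ P) (hz : z ∈ S) : p + x ∈ P + S := by
  refine Set.mem_add.2 ⟨p + -(z - x), hP.2.1 p hp _ (hP.2.2 _ hzx), z, hz, ?_⟩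
  rw [neg_sub, add_assoc, sub_add_cancel]

theorem stmt10 {N : Type*} [Nearring N] (P : Set N) (hP : IsPRegular P)
    (n : ℕ) (hn : 2 ≤ n) (B : Fin n → Set N) :
    P + (⋂ i, B i) ⊆
      P + ⋂ i ∈ {i : Fin n | i ≠ ⟨n - 1, by omega⟩},
        (prodSet (B i) (B ⟨n - 1, by omega⟩) ∩ prodSet (B ⟨n - 1, by omega⟩) (B i)) := by
  rintro _ ⟨p, hp, b, hb, rfl⟩
  rw [Set.mem_iInter] at hb
  obtain ⟨y, hy⟩ := hP.2 b
  refine hP.isAddSub.add_mem_add_of_sub_mem hp hy (Set.mem_iInter₂.2 fun i _ => ?_)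
  exact ⟨mul_mul_mem_prodSet (hb i) y (hb _), mul_mul_mem_prodSet (hb _) y (hb i)⟩
end
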